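/- For n ≥ 1, the function 𝒥_{2n}(x) := −(1/n)·Σ_{k=1, k≠n}^{2n} [tanh(x·cos(kπ/(2n)))/cos(kπ/(2n))]·cos(kπ/n) + x/n is strictly increasing on [0,∞), satisfies 𝒥_{2n}(0) = 0, and tends to +∞ as x → ∞. -/

import Mathlib

open Real Filter Topology
open Finset

lemma myHasDerivAt_tanh (x : ℝ) : HasDerivAt Real.tanh (1 / Real.cosh x ^ 2) x := by
  have h : HasDerivAt (fun y => Real.sinh y / Real.cosh y)
      ((Real.cosh x * Real.cosh x - Real.sinh x * Real.sinh x) / Real.cosh x ^ 2) x :=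
    (Real.hasDerivAt_sinh x).div (Real.hasDerivAt_cosh x) (ne_of_gt (Real.cosh_pos x))
  have h2 : (Real.cosh x * Real.cosh x - Real.sinh x * Real.sinh x) = 1 := by
    have := Real.cosh_sq_sub_sinh_sq x; nlinarith
  rw [h2] at h
  convert h using 1
  funext y; exact Real.tanh_eq_sinh_div_cosh y

lemma abs_tanh_le_one (t : ℝ) : |Real.tanh t| ≤ 1 := by
  have h := Real.cosh_sq_sub_sinh_sq t
  have hp := Real.cosh_pos t
  rw [Real.tanh_eq_sinh_div_cosh, abs_div, abs_of_pos hp, div_le_one hp, abs_le]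
  constructor <;> nlinarith

lemma cos_ne_zero_aux (n k : ℕ) (hn : 1 ≤ n) (hk1 : 1 ≤ k) (hk2 : k ≤ 2 * n) (hkn : k ≠ n) :
    Real.cos (k * π / (2 * n)) ≠ 0 := by
  intro h
  rw [Real.cos_eq_zero_iff] at h
  obtain ⟨m, hm⟩ := h
  have hn' : (0:ℝ) < n := by exact_mod_cast hn
  have hπ := Real.pi_pos
  -- k * π / (2n) = (2m+1) * π / 2  →  k = (2m+1) n
  have : (k : ℝ) = (2 * m + 1) * n := by
    field_simp at hm
    nlinarith [hm]
  have hk : (k : ℤ) = (2 * m + 1) * n := by exact_mod_cast this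
  have h1 : (1:ℤ) ≤ k := by exact_mod_cast hk1
  have h2 : (k:ℤ) ≤ 2 * n := by exact_mod_cast hk2
  have hnz : (1:ℤ) ≤ n := by exact_mod_cast hn
  have : m = 0 := by nlinarith
  subst this
  simp at hk
  exact hkn (by exact_mod_cast hk)

noncomputable def Spart (n m : ℕ) : ℝ := ∑ j ∈ range m, Real.cos ((j + 1) * π / n)

lemma Spart_formula (n : ℕ) (hn : 1 ≤ n) (m : ℕ) :
    2 * Real.sin (π / (2 * n)) * Spart n m
      = Real.sin ((2 * m + 1) * (π / (2 * n))) - Real.sin (π / (2 * n)) := by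
  have hn' : (n:ℝ) ≠ 0 := Nat.cast_ne_zero.mpr (by omega)
  set h := π / (2 * n) with hh
  set f : ℕ → ℝ := fun j => Real.sin ((2 * j + 1) * h) with hf
  have key : ∀ j : ℕ, f (j + 1) - f j = 2 * Real.sin h * Real.cos ((j + 1) * π / n) := by
    intro j
    simp only [hf]
    push_cast
    rw [Real.sin_sub_sin]
    have e1 : ((2 * ((j:ℝ) + 1) + 1) * h - (2 * (j:ℝ) + 1) * h) / 2 = h := by ring
    have e2 : ((2 * ((j:ℝ) + 1) + 1) * h + (2 * (j:ℝ) + 1) * h) / 2 = ((j:ℝ) + 1) * π / n := by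
      rw [hh]; field_simp; ring
    rw [e1, e2]
  calc 2 * Real.sin h * Spart n m
      = ∑ j ∈ range m, (f (j + 1) - f j) := by
        rw [Spart, Finset.mul_sum]; exact Finset.sum_congr rfl fun j _ => (key j).symm
    _ = f m - f 0 := Finset.sum_range_sub f m
    _ = Real.sin ((2 * m + 1) * h) - Real.sin h := by simp only [hf]; push_cast; norm_num

lemma h_pos (n : ℕ) (hn : 1 ≤ n) : 0 < π / (2 * n) := by
  have : (0:ℝ) < 2 * n := by positivity
  exact div_pos Real.pi_pos this

lemma h_le (n : ℕ) (hn : 1 ≤ n) : π / (2 * n) ≤ π / 2 := by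
  apply div_le_div_of_nonneg_left Real.pi_pos.le (by norm_num)
  have : (1:ℝ) ≤ n := by exact_mod_cast hn
  linarith

lemma sin_h_le (n : ℕ) (hn : 1 ≤ n) {t : ℝ} (h1 : π / (2 * n) ≤ t)
    (h2 : t ≤ π - π / (2 * n)) : Real.sin (π / (2 * n)) ≤ Real.sin t := by
  have hp := h_pos n hn
  have hle := h_le n hn
  have hπ := Real.pi_pos
  rcases le_or_gt t (π / 2) with hc | hc
  · exact Real.strictMonoOn_sin.monotoneOn ⟨by linarith, hle⟩ ⟨by linarith, hc⟩ h1
  · rw [← Real.sin_pi_sub t]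
    refine Real.strictMonoOn_sin.monotoneOn (a := π / (2 * (n:ℝ))) (b := π - t) (Set.mem_Icc.mpr ⟨by linarith, hle⟩)
      (Set.mem_Icc.mpr ⟨by linarith, by linarith⟩) (by linarith)

lemma Spart_nonneg (n : ℕ) (hn : 1 ≤ n) (m : ℕ) (hm : m ≤ n - 1) : 0 ≤ Spart n m := by
  have hp := h_pos n hn
  have hsin : 0 < Real.sin (π / (2 * n)) :=
    Real.sin_pos_of_pos_of_lt_pi hp (by have := h_le n hn; have := Real.pi_pos; linarith)
  have hform := Spart_formula n hn m
  have hm' : (m:ℝ) ≤ n - 1 := by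
    have : (m:ℝ) ≤ ((n - 1 : ℕ) : ℝ) := by exact_mod_cast hm
    rwa [Nat.cast_sub hn, Nat.cast_one] at this
  have harg : (2 * m + 1) * (π / (2 * n)) ≤ π - π / (2 * n) := by
    have hn' : (0:ℝ) < n := by exact_mod_cast hn
    have e : π - π / (2 * n) = (2 * (n:ℝ) - 1) * (π / (2 * n)) := by field_simp
    rw [e]
    exact mul_le_mul_of_nonneg_right (by linarith) hp.le
  have hlow : π / (2 * n) ≤ (2 * m + 1) * (π / (2 * n)) := by
    nlinarith [hp, (Nat.cast_nonneg m : (0:ℝ) ≤ m)]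
  have := sin_h_le n hn hlow harg
  nlinarith

lemma Spart_top (n : ℕ) (hn : 1 ≤ n) : Spart n (n - 1) = 0 := by
  have hp := h_pos n hn
  have hsin : 0 < Real.sin (π / (2 * n)) :=
    Real.sin_pos_of_pos_of_lt_pi hp (by have := h_le n hn; have := Real.pi_pos; linarith)
  have hform := Spart_formula n hn (n - 1)
  have harg : (2 * ((n:ℕ) - 1 : ℕ) + 1 : ℝ) * (π / (2 * n)) = π - π / (2 * n) := by
    have hn' : (n:ℝ) ≠ 0 := Nat.cast_ne_zero.mpr (by omega)
    rw [Nat.cast_sub hn, Nat.cast_one]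
    field_simp
    ring
  rw [harg, Real.sin_pi_sub, sub_self] at hform
  nlinarith

lemma arg_le_pi_div_two (n : ℕ) (hn : 1 ≤ n) {c : ℝ} (hc : c ≤ n) : c * π / (2 * n) ≤ π / 2 := by
  have hn' : (0:ℝ) < n := by exact_mod_cast hn
  rw [div_le_div_iff₀ (by positivity) (by norm_num)]
  nlinarith [Real.pi_pos]

lemma sech_mono (x : ℝ) (hx : 0 ≤ x) {a b : ℝ} (ha : 0 ≤ a) (hab : a ≤ b) (hb : b ≤ π / 2) :
    1 / Real.cosh (x * Real.cos a) ^ 2 ≤ 1 / Real.cosh (x * Real.cos b) ^ 2 := by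
  have hπ := Real.pi_pos
  have hcb : 0 ≤ Real.cos b := Real.cos_nonneg_of_mem_Icc ⟨by linarith, hb⟩
  have hba : Real.cos b ≤ Real.cos a :=
    Real.cos_le_cos_of_nonneg_of_le_pi ha (by linarith) hab
  have h1 : Real.cosh (x * Real.cos b) ≤ Real.cosh (x * Real.cos a) := by
    rw [Real.cosh_le_cosh, abs_of_nonneg (mul_nonneg hx hcb),
      abs_of_nonneg (mul_nonneg hx (hcb.trans hba))]
    exact mul_le_mul_of_nonneg_left hba hx
  have hp1 : 0 < Real.cosh (x * Real.cos b) := Real.cosh_pos _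
  have hp2 : 0 < Real.cosh (x * Real.cos a) := Real.cosh_pos _
  apply one_div_le_one_div_of_le (by positivity)
  exact pow_le_pow_left₀ hp1.le h1 2

lemma P_nonpos (n : ℕ) (hn : 1 ≤ n) (x : ℝ) (hx : 0 ≤ x) :
    ∑ i ∈ range (n - 1),
      (1 / Real.cosh (x * Real.cos ((i + 1) * π / (2 * n))) ^ 2) * Real.cos ((i + 1) * π / n)
      ≤ 0 := by
  set f : ℕ → ℝ := fun i => 1 / Real.cosh (x * Real.cos (((i:ℝ) + 1) * π / (2 * n))) ^ 2 with hfd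
  set g : ℕ → ℝ := fun i => Real.cos (((i:ℝ) + 1) * π / n) with hgd
  have habel := Finset.sum_range_by_parts f g (n - 1)
  simp only [smul_eq_mul] at habel
  have hG : ∀ m, ∑ j ∈ range m, g j = Spart n m := fun m => rfl
  rw [habel, hG, Spart_top n hn, mul_zero, zero_sub, neg_nonpos]
  apply Finset.sum_nonneg
  intro i hi
  rw [Finset.mem_range] at hi
  have hi2 : i + 2 ≤ n := by omega
  apply mul_nonneg
  · have := sech_mono x hx (a := ((i:ℝ) + 1) * π / (2 * n)) (b := ((i:ℝ) + 2) * π / (2 * n))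
      (by positivity)
      (by
        apply div_le_div_of_nonneg_right _ (by positivity)
        nlinarith [Real.pi_pos])
      (arg_le_pi_div_two n hn (by exact_mod_cast hi2))
    have he : f (i + 1) = 1 / Real.cosh (x * Real.cos (((i:ℝ) + 2) * π / (2 * n))) ^ 2 := by
      simp only [hfd]; push_cast; ring_nf
    rw [he]
    linarith [this]
  · exact (hG (i + 1)) ▸ Spart_nonneg n hn (i + 1) (by omega)

lemma sum_split (n : ℕ) (hn : 1 ≤ n) (x : ℝ) :
    ∑ k ∈ (Finset.Icc 1 (2 * n)).erase n,
        (1 / Real.cosh (x * Real.cos (k * π / (2 * n))) ^ 2) * Real.cos (k * π / n)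
    = 2 * (∑ i ∈ range (n - 1),
        (1 / Real.cosh (x * Real.cos ((i + 1) * π / (2 * n))) ^ 2) * Real.cos ((i + 1) * π / n))
      + 1 / Real.cosh x ^ 2 := by
  have hn' : (n:ℝ) ≠ 0 := Nat.cast_ne_zero.mpr (by omega)
  set F : ℕ → ℝ := fun k =>
    (1 / Real.cosh (x * Real.cos ((k:ℝ) * π / (2 * n))) ^ 2) * Real.cos ((k:ℝ) * π / n) with hF
  have hsplit : (Finset.Icc 1 (2 * n)).erase n = Finset.Icc 1 (n-1) ∪ Finset.Icc (n+1) (2*n) := by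
    ext k; simp only [Finset.mem_erase, Finset.mem_Icc, Finset.mem_union]; omega
  have hdisj : Disjoint (Finset.Icc 1 (n-1)) (Finset.Icc (n+1) (2*n)) := by
    rw [Finset.disjoint_left]; intro k hk hk'
    simp only [Finset.mem_Icc] at hk hk'; omega
  have hrefl : ∀ j : ℕ, 1 ≤ j → j ≤ n - 1 → F (2 * n - j) = F j := by
    intro j h1 h2
    have hc : ((2 * n - j : ℕ) : ℝ) = 2 * (n:ℝ) - j := by
      rw [Nat.cast_sub (by omega)]; push_cast; ring
    have e1 : ((2 * n - j : ℕ) : ℝ) * π / (2 * n) = π - (j:ℝ) * π / (2 * n) := by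
      rw [hc]; field_simp
    have e2 : ((2 * n - j : ℕ) : ℝ) * π / n = 2 * π - (j:ℝ) * π / n := by
      rw [hc]; field_simp
    simp only [hF, e1, e2, Real.cos_pi_sub, Real.cos_two_pi_sub, mul_neg, ← neg_mul]
    rw [show -x * Real.cos ((j:ℝ) * π / (2*n)) = -(x * Real.cos ((j:ℝ) * π / (2*n))) by ring,
      Real.cosh_neg]
  have hF2n : F (2 * n) = 1 / Real.cosh x ^ 2 := by
    have e1 : ((2 * n : ℕ) : ℝ) * π / (2 * n) = π := by push_cast; field_simp
    have e2 : ((2 * n : ℕ) : ℝ) * π / n = 2 * π := by push_cast; field_simp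
    simp only [hF, e1, e2, Real.cos_pi, Real.cos_two_pi, mul_one, mul_neg_one, Real.cosh_neg]
  have hright : ∑ k ∈ Finset.Icc (n+1) (2*n), F k = ∑ j ∈ Finset.Icc 0 (n-1), F (2*n - j) := by
    apply Finset.sum_nbij' (i := fun k => 2*n - k) (j := fun j => 2*n - j)
    · intro a ha; simp only [Finset.mem_Icc] at *; omega
    · intro a ha; simp only [Finset.mem_Icc] at *; omega
    · intro a ha; simp only [Finset.mem_Icc] at ha; omega
    · intro a ha; simp only [Finset.mem_Icc] at ha; omega
    · intro a ha; simp only [Finset.mem_Icc] at ha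
      congr 1; omega
  have hIcc0 : ∑ j ∈ Finset.Icc 0 (n-1), F (2*n - j)
      = F (2*n) + ∑ j ∈ Finset.Icc 1 (n-1), F (2*n - j) := by
    have : Finset.Icc 0 (n-1) = insert 0 (Finset.Icc 1 (n-1)) := by
      ext k; simp only [Finset.mem_Icc, Finset.mem_insert]; omega
    rw [this, Finset.sum_insert (by simp), Nat.sub_zero]
  have hreflsum : ∑ j ∈ Finset.Icc 1 (n-1), F (2*n - j) = ∑ j ∈ Finset.Icc 1 (n-1), F j :=
    Finset.sum_congr rfl fun j hj => by
      simp only [Finset.mem_Icc] at hj; exact hrefl j hj.1 hj.2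
  have hrange : ∑ j ∈ Finset.Icc 1 (n-1), F j = ∑ i ∈ range (n-1), F (1 + i) := by
    rw [show Finset.Icc 1 (n-1) = Finset.Ico 1 n by
        rw [← Finset.Ico_add_one_right_eq_Icc]; congr 1; omega,
      Finset.sum_Ico_eq_sum_range]
  have hgoalsum : ∑ i ∈ range (n-1), F (1 + i)
      = ∑ i ∈ range (n - 1),
        (1 / Real.cosh (x * Real.cos ((i + 1) * π / (2 * n))) ^ 2) * Real.cos ((i + 1) * π / n) :=
    Finset.sum_congr rfl fun i _ => by simp only [hF]; push_cast; ring_nf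
  calc ∑ k ∈ (Finset.Icc 1 (2 * n)).erase n, F k
      = ∑ k ∈ Finset.Icc 1 (n-1), F k + ∑ k ∈ Finset.Icc (n+1) (2*n), F k := by
        rw [hsplit, Finset.sum_union hdisj]
    _ = ∑ k ∈ Finset.Icc 1 (n-1), F k + (F (2*n) + ∑ j ∈ Finset.Icc 1 (n-1), F j) := by
        rw [hright, hIcc0, hreflsum]
    _ = 2 * (∑ i ∈ range (n-1), F (1 + i)) + 1 / Real.cosh x ^ 2 := by
        rw [hrange, hF2n]; ring
    _ = _ := by rw [hgoalsum]

noncomputable def J2n (n : ℕ) (x : ℝ) : ℝ :=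
  -(1 / n) * ∑ k ∈ (Finset.Icc 1 (2 * n)).erase n,
      (Real.tanh (x * Real.cos (k * π / (2 * n))) / Real.cos (k * π / (2 * n))) *
        Real.cos (k * π / n)
    + x / n

lemma key_lt (n : ℕ) (hn : 1 ≤ n) (x : ℝ) (hx : 0 < x) :
    ∑ k ∈ (Finset.Icc 1 (2 * n)).erase n,
        (1 / Real.cosh (x * Real.cos (k * π / (2 * n))) ^ 2) * Real.cos (k * π / n) < 1 := by
  rw [sum_split n hn x]
  have hP := P_nonpos n hn x hx.le
  have hcosh : 1 < Real.cosh x := by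
    have := Real.cosh_lt_cosh.mpr (show |(0:ℝ)| < |x| by simp [abs_of_pos hx, hx])
    rwa [Real.cosh_zero] at this
  have h2 : 1 / Real.cosh x ^ 2 < 1 := by
    rw [div_lt_one (by positivity)]; nlinarith
  linarith

lemma J2n_hasDerivAt (n : ℕ) (hn : 1 ≤ n) (x : ℝ) :
    HasDerivAt (J2n n)
      (-(1 / (n:ℝ)) * ∑ k ∈ (Finset.Icc 1 (2 * n)).erase n,
          (1 / Real.cosh (x * Real.cos (k * π / (2 * n))) ^ 2) * Real.cos (k * π / n)
        + 1 / (n:ℝ)) x := by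
  have hterm : ∀ k ∈ (Finset.Icc 1 (2 * n)).erase n,
      HasDerivAt (fun y => (Real.tanh (y * Real.cos ((k:ℝ) * π / (2 * n))) /
          Real.cos ((k:ℝ) * π / (2 * n))) * Real.cos ((k:ℝ) * π / n))
        ((1 / Real.cosh (x * Real.cos ((k:ℝ) * π / (2 * n))) ^ 2) * Real.cos ((k:ℝ) * π / n)) x := by
    intro k hk
    simp only [Finset.mem_erase, Finset.mem_Icc] at hk
    have hc : Real.cos ((k:ℝ) * π / (2 * n)) ≠ 0 :=
      cos_ne_zero_aux n k hn hk.2.1 hk.2.2 hk.1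
    set c := Real.cos ((k:ℝ) * π / (2 * n))
    have h1 : HasDerivAt (fun y : ℝ => y * c) (1 * c) x := (hasDerivAt_id x).mul_const c
    have h2 : HasDerivAt (fun y : ℝ => Real.tanh (y * c))
        ((1 / Real.cosh (x * c) ^ 2) * (1 * c)) x := by have := (myHasDerivAt_tanh (x * c)).comp x h1; exact this
    have h3 := (h2.div_const c).mul_const (Real.cos ((k:ℝ) * π / n))
    rw [one_mul, mul_div_cancel_right₀ _ hc] at h3
    exact h3
  have hsum := HasDerivAt.fun_sum hterm
  have hfin := (hsum.const_mul (-(1 / (n:ℝ)))).add ((hasDerivAt_id x).div_const (n:ℝ))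
  exact hfin

theorem J2n_properties (n : ℕ) (hn : 1 ≤ n) :
    StrictMonoOn (J2n n) (Set.Ici (0 : ℝ)) ∧ J2n n 0 = 0 ∧
      Tendsto (J2n n) atTop atTop := by
  have hn0 : (0:ℝ) < n := by exact_mod_cast hn
  refine ⟨?_, ?_, ?_⟩
  · apply strictMonoOn_of_deriv_pos (convex_Ici 0)
    · exact Continuous.continuousOn (continuous_iff_continuousAt.mpr
        fun y => (J2n_hasDerivAt n hn y).continuousAt)
    · intro y hy
      rw [interior_Ici] at hy
      rw [(J2n_hasDerivAt n hn y).deriv]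
      have hkey := key_lt n hn y hy
      have h1n : 0 < 1 / (n:ℝ) := by positivity
      nlinarith
  · simp [J2n]
  · set C : ℝ := ∑ k ∈ (Finset.Icc 1 (2 * n)).erase n,
      1 / |Real.cos ((k:ℝ) * π / (2 * n))| with hC
    have hbound : ∀ y : ℝ, y / n + -(C / n) ≤ J2n n y := by
      intro y
      have hB : |∑ k ∈ (Finset.Icc 1 (2 * n)).erase n,
          (Real.tanh (y * Real.cos ((k:ℝ) * π / (2 * n))) / Real.cos ((k:ℝ) * π / (2 * n))) *
            Real.cos ((k:ℝ) * π / n)| ≤ C := by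
        refine (Finset.abs_sum_le_sum_abs _ _).trans (Finset.sum_le_sum fun k hk => ?_)
        simp only [Finset.mem_erase, Finset.mem_Icc] at hk
        have hc : Real.cos ((k:ℝ) * π / (2 * n)) ≠ 0 :=
          cos_ne_zero_aux n k hn hk.2.1 hk.2.2 hk.1
        have hcp : 0 < |Real.cos ((k:ℝ) * π / (2 * n))| := abs_pos.mpr hc
        rw [abs_mul, abs_div]
        calc |Real.tanh (y * Real.cos ((k:ℝ) * π / (2 * n)))| / |Real.cos ((k:ℝ) * π / (2 * n))| *
              |Real.cos ((k:ℝ) * π / n)|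
            ≤ 1 / |Real.cos ((k:ℝ) * π / (2 * n))| * 1 := by
              apply mul_le_mul _ (Real.abs_cos_le_one _) (abs_nonneg _) (by positivity)
              exact div_le_div_of_nonneg_right (abs_tanh_le_one _) hcp.le
          _ = 1 / |Real.cos ((k:ℝ) * π / (2 * n))| := mul_one _
      rw [J2n]
      have h1 : -(1 / (n:ℝ)) * ∑ k ∈ (Finset.Icc 1 (2 * n)).erase n,
          (Real.tanh (y * Real.cos ((k:ℝ) * π / (2 * n))) / Real.cos ((k:ℝ) * π / (2 * n))) *
            Real.cos ((k:ℝ) * π / n) ≥ -(C / n) := by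
        rw [ge_iff_le, neg_le, neg_mul, neg_neg]
        calc (1 / (n:ℝ)) * _ ≤ (1 / (n:ℝ)) * C := by
              apply mul_le_mul_of_nonneg_left _ (by positivity)
              exact le_trans (le_abs_self _) hB
          _ = C / n := by ring
        
      linarith [h1]
    apply tendsto_atTop_mono hbound
    exact tendsto_atTop_add_const_right atTop (-(C / n))
      (Tendsto.atTop_div_const hn0 tendsto_id)
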